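/- A 1-Lipschitz function f : ℤ_2 → ℤ_2 is measure-preserving if and only if it has the form f(x) = d + x + 2g(x) for some d ∈ ℤ_2 and some 1-Lipschitz g : ℤ_2 → ℤ_2; and f is ergodic if and only if it has the form f(x) = 1 + x + 2(g(x+1) − g(x)) for some 1-Lipschitz g : ℤ_2 → ℤ_2. -/

import Mathlib

open MeasureTheory Finset

namespace VDP

noncomputable instance (p : ℕ) [Fact p.Prime] : MeasurableSpace ℤ_[p] := borel _
instance (p : ℕ) [Fact p.Prime] : BorelSpace ℤ_[p] := ⟨rfl⟩

/-- The Haar probability measure on `ℤ_[p]`. -/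
noncomputable def haarZp (p : ℕ) [Fact p.Prime] : Measure ℤ_[p] :=
  Measure.addHaarMeasure ⊤

/-- `f` is 1-Lipschitz. -/
def IsLip (p : ℕ) [Fact p.Prime] (f : ℤ_[p] → ℤ_[p]) : Prop :=
  ∀ x y : ℤ_[p], ‖f x - f y‖ ≤ ‖x - y‖

/-- The van der Put basis function `χ(m, x)` on `ℤ_[p]` (with `⌊log_p 0⌋ = 0`). -/
noncomputable def chi (p : ℕ) [Fact p.Prime] (m : ℕ) (x : ℤ_[p]) : ℤ_[p] :=
  if ‖x - (m : ℤ_[p])‖ ≤ ((p : ℝ) ^ (Nat.log p m + 1))⁻¹ then 1 else 0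

/-- `q(m) = m_s p^s`, the leading term of the `p`-adic expansion of `m`. -/
def q (p m : ℕ) : ℕ := m / p ^ Nat.log p m * p ^ Nat.log p m

/-- `f` has van der Put expansion with coefficients `B`. -/
def vdpExpansion (p : ℕ) [Fact p.Prime] (f : ℤ_[p] → ℤ_[p]) (B : ℕ → ℤ_[p]) : Prop :=
  ∀ x, f x = ∑' m, B m * chi p m x

/-- `f` is bijective modulo `p^n`. -/
def BijModPow (p : ℕ) [Fact p.Prime] (f : ℤ_[p] → ℤ_[p]) (n : ℕ) : Prop :=
  Function.Bijective fun a : ZMod (p ^ n) => PadicInt.toZModPow n (f ((a.val : ℕ) : ℤ_[p]))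

/-- `f` is transitive modulo `p^n`. -/
def TransModPow (p : ℕ) [Fact p.Prime] (f : ℤ_[p] → ℤ_[p]) (n : ℕ) : Prop :=
  ∀ x : ℤ_[p], ∀ a : ZMod (p ^ n), ∃ k : ℕ, PadicInt.toZModPow n (f^[k] x) = a

/-- The `i`-th digit of the canonical `p`-adic expansion of `x`. -/
noncomputable def digit (p : ℕ) [Fact p.Prime] (x : ℤ_[p]) (i : ℕ) : ℕ :=
  x.appr (i + 1) / p ^ i % p

end VDP

/-!
A 1-Lipschitz map `f` induces maps `f mod p ^ n` on `ZMod (p ^ n)`, and the balls of radius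
`p ^ (-n)` are the fibres of reduction modulo `p ^ n`. A finite measure on `ℤ_[p]` is determined
by its values on balls, so `f` preserves Haar measure iff every `f mod p ^ n` is bijective, and
the same argument applied to `f`-invariant measures shows that `f` is ergodic iff every
`f mod p ^ n` is a single cycle.

For `p = 2`, bijectivity modulo `2 ^ (n + 1)` says that `f x - f y` and `x - y` have the same
valuation, i.e. that `f x - x - f 0` is twice a 1-Lipschitz function. Write `f = 1 + x + 2 h`.
If `f` is a single cycle modulo `2 ^ n`, then its orbits meet every residue class once per period,
so `f^[2 ^ n]` moves every point by `2 ^ n + 2 ∑_{z < 2 ^ n} h z` modulo `2 ^ (n + 1)`.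
By induction on `n`, `f` is a single cycle at every level iff `2 ^ n ∣ ∑_{z < 2 ^ n} h z`
for all `n`. This is exactly the condition for `h` to be `g (x + 1) - g x` with `g` 1-Lipschitz:
`g` is the continuous extension of the partial sums `m ↦ ∑_{z < m} h z`.
-/

open PadicInt Function Topology Filter
open scoped ENNReal

namespace Function

variable {α : Type*} {σ : α → α}

theorem bijective_iterate_fin_minimalPeriod (h : ∀ a b, ∃ k, σ^[k] a = b) (a : α) :
    Bijective fun i : Fin (minimalPeriod σ a) => σ^[i] a := by
  have hper : a ∈ periodicPts σ := by
    obtain ⟨k, hk⟩ := h (σ a) a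
    exact ⟨k + 1, k.succ_pos, by rw [IsPeriodicPt, IsFixedPt, iterate_succ_apply, hk]⟩
  refine ⟨fun i j hij => Fin.ext (iterate_injOn_Iio_minimalPeriod i.2 j.2 hij), fun b => ?_⟩
  obtain ⟨k, hk⟩ := h a b
  exact ⟨⟨k % _, Nat.mod_lt _ (minimalPeriod_pos_of_mem_periodicPts hper)⟩, by
    simp [iterate_mod_minimalPeriod_eq, hk]⟩

theorem minimalPeriod_eq_card [Fintype α] (h : ∀ a b, ∃ k, σ^[k] a = b) (a : α) :
    minimalPeriod σ a = Fintype.card α := by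
  simpa using Fintype.card_of_bijective (bijective_iterate_fin_minimalPeriod h a)

theorem sum_range_card_iterate [Fintype α] {M : Type*} [AddCommMonoid M]
    (h : ∀ a b, ∃ k, σ^[k] a = b) (a : α) (F : α → M) :
    ∑ j ∈ range (Fintype.card α), F (σ^[j] a) = ∑ b, F b := by
  rw [← minimalPeriod_eq_card h a, Finset.sum_range fun j => F (σ^[j] a)]
  exact Fintype.sum_bijective _ (bijective_iterate_fin_minimalPeriod h a) _ _ fun _ => rfl

end Function

theorem dvd_sub_of_modEq {R : Type*} [CommRing R] {G : ℕ → R} {d : R} {N : ℕ}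
    (hG : ∀ a, d ∣ G (a + N) - G a) {a b : ℕ} (hab : a ≡ b [MOD N]) : d ∣ G a - G b := by
  wlog hle : a ≤ b generalizing a b
  · exact dvd_sub_comm.1 (this hab.symm (le_of_not_ge hle))
  obtain ⟨q, hq⟩ := (Nat.modEq_iff_dvd' hle).1 hab
  obtain rfl : b = a + N * q := by omega
  clear hab hq hle
  rw [dvd_sub_comm]
  induction q with
  | zero => simp
  | succ q ih =>
    rw [mul_add_one, ← add_assoc, ← sub_add_sub_cancel _ (G (a + N * q))]
    exact dvd_add (hG _) ih

theorem iterate_eq_add_sum {R : Type*} [CommSemiring R] {f h : R → R}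
    (hf : ∀ x, f x = 1 + x + 2 * h x) (y : R) (k : ℕ) :
    f^[k] y = y + k + 2 * ∑ j ∈ range k, h (f^[j] y) := by
  induction k with
  | zero => simp
  | succ k ih =>
    rw [iterate_succ_apply', hf, sum_range_succ]
    nth_rw 1 [ih]
    push_cast
    ring

namespace VDP

section General

variable {p : ℕ} [Fact p.Prime] {f g h : ℤ_[p] → ℤ_[p]} {n : ℕ}

/-! ### Reduction modulo `p ^ n` and 1-Lipschitz maps -/

theorem toZModPow_eq_iff_dvd {x y : ℤ_[p]} :
    toZModPow n x = toZModPow n y ↔ (p : ℤ_[p]) ^ n ∣ x - y := by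
  rw [← sub_eq_zero, ← map_sub, ← RingHom.mem_ker, ker_toZModPow, Ideal.mem_span_singleton]

theorem toZModPow_natCast_val (a : ZMod (p ^ n)) : toZModPow n (a.val : ℤ_[p]) = a := by
  rw [map_natCast, ZMod.natCast_zmod_val]

theorem norm_le_pow_iff_dvd (x : ℤ_[p]) (n : ℕ) :
    ‖x‖ ≤ (p : ℝ) ^ (-(n : ℤ)) ↔ (p : ℤ_[p]) ^ n ∣ x := by
  rw [norm_le_pow_iff_mem_span_pow, Ideal.mem_span_singleton]

theorem isClosed_setOf_pow_dvd (n : ℕ) : IsClosed {x : ℤ_[p] | (p : ℤ_[p]) ^ n ∣ x} := by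
  simp_rw [← norm_le_pow_iff_dvd]
  exact isClosed_le continuous_norm continuous_const

theorem exists_forall_dvd_dist_lt {ε : ℝ} (hε : 0 < ε) :
    ∃ N : ℕ, ∀ x y : ℤ_[p], (p : ℤ_[p]) ^ N ∣ x - y → dist x y < ε := by
  obtain ⟨N, hN⟩ := exists_pow_neg_lt p hε
  exact ⟨N, fun x y hxy => (((norm_le_pow_iff_dvd _ N).2 hxy).trans_lt hN)⟩

theorem isLip_iff_dvd :
    IsLip p f ↔ ∀ n x y, (p : ℤ_[p]) ^ n ∣ x - y → (p : ℤ_[p]) ^ n ∣ f x - f y := by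
  refine ⟨fun hf n x y hxy => ?_, fun hf x y => ?_⟩
  · rw [← norm_le_pow_iff_dvd] at hxy ⊢
    exact (hf x y).trans hxy
  · rcases eq_or_ne x y with rfl | hxy
    · simp
    · have hv := norm_eq_zpow_neg_valuation (sub_ne_zero.2 hxy)
      rw [hv, norm_le_pow_iff_dvd]
      exact hf _ x y ((norm_le_pow_iff_dvd _ _).1 hv.le)

theorem IsLip.continuous (hf : IsLip p f) : Continuous f :=
  (LipschitzWith.of_dist_le_mul (K := 1) fun x y => by
    simpa [dist_eq_norm] using hf x y).continuous

theorem IsLip.const_add (hg : IsLip p g) (c : ℤ_[p]) : IsLip p fun x => c + g x := by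
  simpa [IsLip] using hg

theorem IsLip.fwdDiff (hg : IsLip p g) (c : ℤ_[p]) : IsLip p (fwdDiff c g) := by
  rw [isLip_iff_dvd] at hg ⊢
  intro n x y hxy
  simp only [_root_.fwdDiff]
  rw [sub_sub_sub_comm]
  exact dvd_sub (hg n _ _ (by rwa [add_sub_add_right_eq_sub])) (hg n x y hxy)

theorem exists_isLip_eq_mul {F : ℤ_[p] → ℤ_[p]}
    (hF : ∀ n x y, (p : ℤ_[p]) ^ n ∣ x - y → (p : ℤ_[p]) ^ (n + 1) ∣ F x - F y)
    (h0 : (p : ℤ_[p]) ∣ F 0) : ∃ g, IsLip p g ∧ ∀ x, F x = p * g x := by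
  have hdiv : ∀ x, (p : ℤ_[p]) ∣ F x := fun x => by
    have hx := hF 0 x 0 (by simp)
    rw [zero_add, pow_one] at hx
    simpa using dvd_add hx h0
  choose g hg using hdiv
  refine ⟨g, isLip_iff_dvd.2 fun n x y hxy => ?_, hg⟩
  have hpn := hF n x y hxy
  rwa [hg x, hg y, ← mul_sub, pow_succ',
    mul_dvd_mul_iff_left (Nat.cast_ne_zero.2 (Fact.out : p.Prime).ne_zero)] at hpn

noncomputable def inducedMap (f : ℤ_[p] → ℤ_[p]) (n : ℕ) : ZMod (p ^ n) → ZMod (p ^ n) :=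
  fun a => toZModPow n (f (a.val : ℤ_[p]))

theorem IsLip.semiconj_inducedMap (hf : IsLip p f) (n : ℕ) :
    Semiconj (toZModPow n) f (inducedMap f n) := fun x => by
  rw [inducedMap, toZModPow_eq_iff_dvd]
  apply isLip_iff_dvd.1 hf
  rw [← toZModPow_eq_iff_dvd, toZModPow_natCast_val]

theorem IsLip.toZModPow_iterate (hf : IsLip p f) (k : ℕ) (x : ℤ_[p]) :
    toZModPow n (f^[k] x) = (inducedMap f n)^[k] (toZModPow n x) :=
  (hf.semiconj_inducedMap n).iterate_right k x

theorem transModPow_iff_dvd :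
    TransModPow p f n ↔ ∀ x z : ℤ_[p], ∃ k, (p : ℤ_[p]) ^ n ∣ f^[k] x - z := by
  simp_rw [← toZModPow_eq_iff_dvd]
  refine ⟨fun hf x z => hf x _, fun hf x a => ?_⟩
  simpa [toZModPow_natCast_val] using hf x (a.val : ℤ_[p])

theorem IsLip.transModPow_iff (hf : IsLip p f) :
    TransModPow p f n ↔ ∀ a b, ∃ k, (inducedMap f n)^[k] a = b := by
  refine ⟨fun ht a b => ?_, fun ht x b => ?_⟩
  · simpa [hf.toZModPow_iterate, toZModPow_natCast_val] using ht (a.val : ℤ_[p]) b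
  · simpa [hf.toZModPow_iterate] using ht (toZModPow n x) b

theorem bijModPow_iff : BijModPow p f n ↔ Bijective (inducedMap f n) := Iff.rfl

theorem BijModPow.pow_dvd_sub (hb : BijModPow p f n) (hf : IsLip p f) {x y : ℤ_[p]}
    (hxy : (p : ℤ_[p]) ^ n ∣ f x - f y) : (p : ℤ_[p]) ^ n ∣ x - y := by
  rw [← toZModPow_eq_iff_dvd, (hf.semiconj_inducedMap n).eq, (hf.semiconj_inducedMap n).eq]
    at hxy
  exact toZModPow_eq_iff_dvd.1 ((bijModPow_iff.1 hb).1 hxy)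

theorem TransModPow.bijModPow (ht : TransModPow p f n) (hf : IsLip p f) : BijModPow p f n := by
  rw [bijModPow_iff, ← Finite.surjective_iff_bijective]
  intro b
  obtain ⟨k, hk⟩ := hf.transModPow_iff.1 ht (inducedMap f n 0) b
  rw [← iterate_succ_apply, iterate_succ_apply'] at hk
  exact ⟨_, hk⟩

theorem TransModPow.minimalPeriod_inducedMap (ht : TransModPow p f n) (hf : IsLip p f)
    (a : ZMod (p ^ n)) : minimalPeriod (inducedMap f n) a = p ^ n := by
  rw [minimalPeriod_eq_card (hf.transModPow_iff.1 ht), ZMod.card]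

theorem TransModPow.pow_dvd_iterate_sub (ht : TransModPow p f n) (hf : IsLip p f) (y : ℤ_[p]) :
    (p : ℤ_[p]) ^ n ∣ f^[p ^ n] y - y := by
  have hperiod := iterate_minimalPeriod (f := inducedMap f n) (x := toZModPow n y)
  rwa [ht.minimalPeriod_inducedMap hf, ← hf.toZModPow_iterate, toZModPow_eq_iff_dvd] at hperiod

theorem TransModPow.not_pow_dvd_iterate_sub (ht : TransModPow p f n) (hf : IsLip p f) {m : ℕ}
    (hm : m ≠ 0) (hmn : m < p ^ n) (y : ℤ_[p]) : ¬(p : ℤ_[p]) ^ n ∣ f^[m] y - y := by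
  rw [← toZModPow_eq_iff_dvd, hf.toZModPow_iterate]
  exact not_isPeriodicPt_of_pos_of_lt_minimalPeriod hm (by rwa [ht.minimalPeriod_inducedMap hf])

/-! ### Haar measure of balls -/

theorem continuous_toZModPow (n : ℕ) : Continuous (toZModPow n : ℤ_[p] → ZMod (p ^ n)) := by
  refine continuous_discrete_rng.2 fun a => ?_
  have hball :
      toZModPow n ⁻¹' {a} = Metric.closedBall (a.val : ℤ_[p]) ((p : ℝ) ^ (-(n : ℤ))) := by
    ext x
    rw [Set.mem_preimage, Set.mem_singleton_iff, Metric.mem_closedBall, dist_eq_norm,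
      norm_le_pow_iff_dvd, ← toZModPow_eq_iff_dvd, toZModPow_natCast_val]
  rw [hball]
  exact IsUltrametricDist.isOpen_closedBall _
    (zpow_pos (Nat.cast_pos.2 (Fact.out : p.Prime).pos) _).ne'

theorem measurableSet_preimage_toZModPow (n : ℕ) (s : Set (ZMod (p ^ n))) :
    MeasurableSet (toZModPow n ⁻¹' s : Set ℤ_[p]) :=
  ((isOpen_discrete s).preimage (continuous_toZModPow n)).measurableSet

def balls (p : ℕ) [Fact p.Prime] : Set (Set ℤ_[p]) :=
  {s | ∃ (n : ℕ) (a : ZMod (p ^ n)), toZModPow n ⁻¹' {a} = s}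

theorem isPiSystem_balls : IsPiSystem (balls p) := by
  have nested : ∀ (n m : ℕ) (a : ZMod (p ^ n)) (b : ZMod (p ^ m)), n ≤ m →
      (toZModPow n ⁻¹' {a} ∩ toZModPow m ⁻¹' {b}).Nonempty →
      toZModPow n ⁻¹' {a} ∩ toZModPow m ⁻¹' {b} = toZModPow m ⁻¹' {b} := by
    rintro n m a b hnm ⟨y, hya, hyb⟩
    refine Set.inter_eq_self_of_subset_right fun x hxb => ?_
    simp only [Set.mem_preimage, Set.mem_singleton_iff] at hya hyb hxb ⊢
    rw [← hya, toZModPow_eq_iff_dvd]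
    exact (pow_dvd_pow _ hnm).trans (toZModPow_eq_iff_dvd.1 (hxb.trans hyb.symm))
  rintro _ ⟨n, a, rfl⟩ _ ⟨m, b, rfl⟩ hne
  rcases le_total n m with h | h
  · exact ⟨m, b, (nested n m a b h hne).symm⟩
  · rw [Set.inter_comm] at hne ⊢
    exact ⟨n, a, (nested m n b a h hne).symm⟩

theorem isTopologicalBasis_balls : TopologicalSpace.IsTopologicalBasis (balls p) := by
  refine TopologicalSpace.isTopologicalBasis_of_isOpen_of_nhds ?_ fun x u hxu hu => ?_
  · rintro _ ⟨n, a, rfl⟩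
    exact (isOpen_discrete _).preimage (continuous_toZModPow n)
  · obtain ⟨ε, hε, hball⟩ := Metric.isOpen_iff.1 hu x hxu
    obtain ⟨N, hN⟩ := exists_forall_dvd_dist_lt (p := p) hε
    refine ⟨toZModPow N ⁻¹' {toZModPow N x}, ⟨N, _, rfl⟩, rfl, fun y hy => hball ?_⟩
    exact hN y x (toZModPow_eq_iff_dvd.1 hy)

instance : (haarZp p).IsAddHaarMeasure := by
  unfold haarZp
  infer_instance

instance : IsProbabilityMeasure (haarZp p) :=
  ⟨Measure.addHaarMeasure_self (G := ℤ_[p])⟩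

theorem measure_preimage_toZModPow_of_forall_eq (ν : Measure ℤ_[p])
    (hν : ∀ a b : ZMod (p ^ n), ν (toZModPow n ⁻¹' {a}) = ν (toZModPow n ⁻¹' {b}))
    (a : ZMod (p ^ n)) : ν (toZModPow n ⁻¹' {a}) = ν Set.univ / (p ^ n : ℝ≥0∞) := by
  have htotal := sum_measure_preimage_singleton (μ := ν) Finset.univ
    fun b _ => measurableSet_preimage_toZModPow n {b}
  simp only [Finset.coe_univ, Set.preimage_univ, hν _ a, Finset.sum_const, Finset.card_univ,
    ZMod.card, nsmul_eq_mul] at htotal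
  rw [← htotal, Nat.cast_pow, mul_comm,
    ENNReal.mul_div_cancel_right (by simp [NeZero.ne]) (by simp)]

theorem haarZp_preimage_toZModPow (a : ZMod (p ^ n)) :
    haarZp p (toZModPow n ⁻¹' {a}) = ((p : ℝ≥0∞) ^ n)⁻¹ := by
  have htranslate : ∀ a b : ZMod (p ^ n), toZModPow n ⁻¹' {a} =
      (fun x => ((b.val : ℤ_[p]) - a.val) + x) ⁻¹' (toZModPow n ⁻¹' {b}) := by
    intro a b
    ext x
    simp only [Set.mem_preimage, Set.mem_singleton_iff, map_add, map_sub, toZModPow_natCast_val]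
    constructor <;> intro hx <;> linear_combination hx
  rw [measure_preimage_toZModPow_of_forall_eq _ (fun a b => by rw [htranslate a b,
    measure_preimage_add]), measure_univ, one_div]

theorem measure_eq_smul_haarZp (ν : Measure ℤ_[p]) [IsFiniteMeasure ν]
    (hν : ∀ n (a b : ZMod (p ^ n)), ν (toZModPow n ⁻¹' {a}) = ν (toZModPow n ⁻¹' {b})) :
    ν = ν Set.univ • haarZp p := by
  have hgen : (inferInstance : MeasurableSpace ℤ_[p]) = MeasurableSpace.generateFrom (balls p) :=
    BorelSpace.measurable_eq.trans isTopologicalBasis_balls.borel_eq_generateFrom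
  refine ext_of_generate_finite _ hgen isPiSystem_balls ?_ (by simp)
  rintro _ ⟨n, a, rfl⟩
  rw [measure_preimage_toZModPow_of_forall_eq ν (hν n), Measure.smul_apply,
    haarZp_preimage_toZModPow, smul_eq_mul, div_eq_mul_inv]

/-! ### Measure preservation and ergodicity -/

theorem IsLip.preimage_preimage_toZModPow (hf : IsLip p f) (s : Set (ZMod (p ^ n))) :
    f ⁻¹' (toZModPow n ⁻¹' s) = toZModPow n ⁻¹' (inducedMap f n ⁻¹' s) := by
  rw [← Set.preimage_comp, ← Set.preimage_comp, (hf.semiconj_inducedMap n).comp_eq]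

theorem IsLip.preimage_toZModPow_inducedMap (hf : IsLip p f) (hb : BijModPow p f n)
    (a : ZMod (p ^ n)) :
    f ⁻¹' (toZModPow n ⁻¹' {inducedMap f n a}) = toZModPow n ⁻¹' {a} := by
  rw [hf.preimage_preimage_toZModPow, ← Set.image_singleton,
    (bijModPow_iff.1 hb).1.preimage_image]

theorem measurePreserving_of_bijModPow (hf : IsLip p f) (hb : ∀ n, BijModPow p f n) :
    MeasurePreserving f (haarZp p) (haarZp p) := by
  have hmeas := hf.continuous.measurable
  have hball : ∀ n (a : ZMod (p ^ n)),
      (haarZp p).map f (toZModPow n ⁻¹' {a}) = ((p : ℝ≥0∞) ^ n)⁻¹ := by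
    intro n a
    obtain ⟨b, rfl⟩ := (bijModPow_iff.1 (hb n)).2 a
    rw [Measure.map_apply hmeas (measurableSet_preimage_toZModPow n _),
      hf.preimage_toZModPow_inducedMap (hb n), haarZp_preimage_toZModPow]
  refine ⟨hmeas, ?_⟩
  rw [measure_eq_smul_haarZp ((haarZp p).map f) fun n a b => by rw [hball, hball],
    Measure.map_apply hmeas MeasurableSet.univ, Set.preimage_univ, measure_univ, one_smul]

theorem bijModPow_of_measurePreserving (hf : IsLip p f)
    (hmp : MeasurePreserving f (haarZp p) (haarZp p)) (n : ℕ) : BijModPow p f n := by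
  rw [bijModPow_iff, ← Finite.surjective_iff_bijective]
  intro a
  have hne : haarZp p (toZModPow n ⁻¹' (inducedMap f n ⁻¹' {a})) ≠ 0 := by
    rw [← hf.preimage_preimage_toZModPow,
      hmp.measure_preimage (measurableSet_preimage_toZModPow n _).nullMeasurableSet,
      haarZp_preimage_toZModPow]
    simp
  obtain ⟨x, hx⟩ := nonempty_of_measure_ne_zero hne
  exact ⟨_, hx⟩

theorem measurePreserving_iff_bijModPow (hf : IsLip p f) :
    MeasurePreserving f (haarZp p) (haarZp p) ↔ ∀ n, BijModPow p f n :=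
  ⟨bijModPow_of_measurePreserving hf, measurePreserving_of_bijModPow hf⟩

theorem transModPow_of_ergodic (hf : IsLip p f) (herg : Ergodic f (haarZp p)) (n : ℕ) :
    TransModPow p f n := by
  rw [hf.transModPow_iff]
  by_contra! hne
  obtain ⟨a, b, hab⟩ := hne
  set s := toZModPow n ⁻¹' Set.range fun k => (inducedMap f n)^[k] a
  have hinv : f '' s ⊆ s := by
    rintro _ ⟨x, ⟨k, hk⟩, rfl⟩
    refine ⟨k + 1, ?_⟩
    simp only at hk ⊢
    rw [iterate_succ_apply', hk]
    exact ((hf.semiconj_inducedMap n).eq x).symm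
  have hpos : ∀ c : ZMod (p ^ n), haarZp p (toZModPow n ⁻¹' {c}) ≠ 0 := by
    simp [haarZp_preimage_toZModPow]
  rcases herg.ae_empty_or_univ_of_image_ae_le
    (measurableSet_preimage_toZModPow n _).nullMeasurableSet hinv.eventuallyLE with hs | hs
  · refine hpos a (measure_mono_null (fun x hx => ?_) (ae_eq_empty.1 hs))
    exact Set.mem_preimage.2 (Set.mem_range.2 ⟨0, (Set.mem_singleton_iff.1 hx).symm⟩)
  · refine hpos b (measure_mono_null (fun x hx => ?_) (ae_eq_univ.1 hs))
    intro hxs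
    obtain ⟨k, hk⟩ := Set.mem_range.1 (Set.mem_preimage.1 hxs)
    exact hab k (hk.trans (Set.mem_singleton_iff.1 hx))

theorem eq_smul_haarZp_of_measurePreserving (hf : IsLip p f) (ht : ∀ n, TransModPow p f n)
    {ν : Measure ℤ_[p]} [IsFiniteMeasure ν] (hν : MeasurePreserving f ν ν) :
    ν = ν Set.univ • haarZp p := by
  refine measure_eq_smul_haarZp ν fun n a b => ?_
  have hstep : ∀ c, ν (toZModPow n ⁻¹' {c}) = ν (toZModPow n ⁻¹' {inducedMap f n c}) :=
    fun c => by
      rw [← hf.preimage_toZModPow_inducedMap ((ht n).bijModPow hf) c]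
      exact hν.measure_preimage (measurableSet_preimage_toZModPow n _).nullMeasurableSet
  obtain ⟨k, rfl⟩ := hf.transModPow_iff.1 (ht n) a b
  induction k with
  | zero => rfl
  | succ k ih => rw [ih, iterate_succ_apply', hstep]

theorem ergodic_of_transModPow (hf : IsLip p f) (ht : ∀ n, TransModPow p f n) :
    Ergodic f (haarZp p) := by
  have hmp := measurePreserving_of_bijModPow hf fun n => (ht n).bijModPow hf
  refine ⟨hmp, ⟨fun s hs hfs => ?_⟩⟩
  have hrestrict := eq_smul_haarZp_of_measurePreserving hf ht (hfs ▸ hmp.restrict_preimage hs)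
  have hsq : haarZp p s = haarZp p s * haarZp p s := by
    simpa [Measure.restrict_apply_self] using congr($hrestrict s)
  rw [Filter.eventuallyConst_set', ae_eq_empty, ae_eq_univ, prob_compl_eq_one_sub hs]
  rcases eq_or_ne (haarZp p s) 0 with h0 | h0
  · exact Or.inl h0
  · right
    rw [← (ENNReal.mul_right_inj h0 (measure_ne_top _ s)).1 (hsq.symm.trans (mul_one _).symm),
      tsub_self]

theorem ergodic_iff_transModPow (hf : IsLip p f) :
    Ergodic f (haarZp p) ↔ ∀ n, TransModPow p f n :=
  ⟨transModPow_of_ergodic hf, ergodic_of_transModPow hf⟩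

/-! ### Sums along orbits and the difference operator -/

theorem isLip_add_one : IsLip p (· + 1) := fun x y => by simp

theorem transModPow_add_one (n : ℕ) : TransModPow p (· + 1) n := by
  rw [transModPow_iff_dvd]
  intro x z
  refine ⟨(toZModPow n (z - x)).val, ?_⟩
  rw [add_right_iterate_apply, nsmul_one, ← toZModPow_eq_iff_dvd, map_add, map_natCast,
    ZMod.natCast_zmod_val, map_sub, add_sub_cancel]

/-- A transitive orbit of length `p ^ n` runs once through every residue class modulo `p ^ n`. -/
theorem IsLip.toZModPow_sum_range_iterate (hh : IsLip p h) (hg : IsLip p g)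
    (ht : TransModPow p g n) (y : ℤ_[p]) :
    toZModPow n (∑ j ∈ range (p ^ n), h (g^[j] y)) = ∑ b, inducedMap h n b := by
  have horbit :=
    sum_range_card_iterate (hg.transModPow_iff.1 ht) (toZModPow n y) (inducedMap h n)
  rw [ZMod.card] at horbit
  simp_rw [map_sum, (hh.semiconj_inducedMap n).eq, hg.toZModPow_iterate, horbit]

theorem IsLip.toZModPow_sum_range_add (hh : IsLip p h) (c : ℤ_[p]) :
    toZModPow n (∑ z ∈ range (p ^ n), h (c + z)) = ∑ b, inducedMap h n b := by
  simpa [add_right_iterate_apply] using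
    hh.toZModPow_sum_range_iterate isLip_add_one (transModPow_add_one n) c

theorem natCast_appr {k : ℕ} (hk : n ≤ k) (x : ℤ_[p]) :
    ((x.appr k : ℕ) : ZMod (p ^ n)) = toZModPow n x := by
  rw [← map_natCast (toZModPow (p := p) n), toZModPow_eq_iff_dvd, dvd_sub_comm]
  exact (pow_dvd_pow _ hk).trans (Ideal.mem_span_singleton.1 (appr_spec k x))

theorem exists_isLip_natCast_eq {G : ℕ → ℤ_[p]}
    (hG : ∀ n a b, a ≡ b [MOD p ^ n] → (p : ℤ_[p]) ^ n ∣ G a - G b) :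
    ∃ g, IsLip p g ∧ ∀ m : ℕ, g m = G m := by
  have happr : ∀ n x y k l, n ≤ k → n ≤ l → (p : ℤ_[p]) ^ n ∣ x - y →
      (p : ℤ_[p]) ^ n ∣ G (x.appr k) - G (y.appr l) := fun n x y k l hk hl hxy => by
    refine hG n _ _ ?_
    rwa [← ZMod.natCast_eq_natCast_iff, natCast_appr hk, natCast_appr hl, toZModPow_eq_iff_dvd]
  have hcauchy : ∀ x : ℤ_[p], CauchySeq fun k => G (x.appr k) := fun x => by
    refine Metric.cauchySeq_iff.2 fun ε hε => ?_
    obtain ⟨N, hN⟩ := exists_forall_dvd_dist_lt (p := p) hε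
    exact ⟨N, fun k hk l hl => hN _ _ (happr N x x k l hk hl (by simp))⟩
  let g := fun x : ℤ_[p] => limUnder atTop fun k => G (x.appr k)
  have hlim : ∀ x, Tendsto (fun k => G (x.appr k)) atTop (𝓝 (g x)) :=
    fun x => (hcauchy x).tendsto_limUnder
  refine ⟨g, isLip_iff_dvd.2 fun n x y hxy => ?_, fun m => ?_⟩
  · exact (isClosed_setOf_pow_dvd n).mem_of_tendsto ((hlim x).sub (hlim y))
      ((eventually_ge_atTop n).mono fun k hk => happr n x y k k hk hk hxy)
  · refine tendsto_nhds_unique (hlim m) (Metric.tendsto_atTop.2 fun ε hε => ?_)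
    obtain ⟨N, hN⟩ := exists_forall_dvd_dist_lt (p := p) hε
    refine ⟨N, fun k hk => hN _ _ (hG N _ _ ?_)⟩
    rw [← ZMod.natCast_eq_natCast_iff, natCast_appr hk, map_natCast]

theorem pow_dvd_sum_range_fwdDiff (hg : IsLip p g) (n : ℕ) :
    (p : ℤ_[p]) ^ n ∣ ∑ z ∈ range (p ^ n), fwdDiff 1 g z := by
  have htelescope :
      ∑ z ∈ range (p ^ n), fwdDiff 1 g z = g ((p ^ n : ℕ) : ℤ_[p]) - g (0 : ℕ) := by
    rw [← Finset.sum_range_sub fun m : ℕ => g m]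
    simp [fwdDiff]
  rw [htelescope]
  exact isLip_iff_dvd.1 hg n _ _ (by simp)

theorem exists_isLip_fwdDiff_eq (hh : IsLip p h)
    (hsum : ∀ n, (p : ℤ_[p]) ^ n ∣ ∑ z ∈ range (p ^ n), h z) :
    ∃ g, IsLip p g ∧ fwdDiff 1 g = h := by
  have hblock :
      ∀ n a, (p : ℤ_[p]) ^ n ∣ ∑ z ∈ range (p ^ n), h ((a + z : ℕ) : ℤ_[p]) := by
    intro n a
    have hshift := toZModPow_eq_iff_dvd.1 ((hh.toZModPow_sum_range_add (n := n) a).trans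
      (hh.toZModPow_sum_range_add 0).symm)
    simpa using dvd_add hshift (hsum n)
  let G : ℕ → ℤ_[p] := fun m => ∑ z ∈ range m, h z
  have hG : ∀ n a, (p : ℤ_[p]) ^ n ∣ G (a + p ^ n) - G a := fun n a => by
    simp only [G, Finset.sum_range_add, add_sub_cancel_left]
    exact hblock n a
  obtain ⟨g, hg, hgG⟩ := exists_isLip_natCast_eq fun n a b hab => dvd_sub_of_modEq (hG n) hab
  refine ⟨g, hg, (denseRange_natCast).equalizer (hg.fwdDiff 1).continuous hh.continuous
    (funext fun m => ?_)⟩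
  simp only [comp_apply, fwdDiff]
  rw [← Nat.cast_succ, hgG, hgG]
  simp only [G, Finset.sum_range_succ, add_sub_cancel_left]

end General

/-! ### The case `p = 2` -/

variable {f g h : ℤ_[2] → ℤ_[2]} {n : ℕ}

theorem two_dvd_iff_toZModPow_one (z : ℤ_[2]) : 2 ∣ z ↔ toZModPow 1 z = 0 := by
  simpa using (toZModPow_eq_iff_dvd (n := 1) (x := z) (y := 0)).symm

theorem two_dvd_or_two_dvd_sub_one (z : ℤ_[2]) : 2 ∣ z ∨ 2 ∣ z - 1 := by
  have hZMod2 : ∀ u : ZMod (2 ^ 1), u = 0 ∨ u - 1 = 0 := by decide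
  simpa [two_dvd_iff_toZModPow_one] using hZMod2 (toZModPow 1 z)

theorem two_dvd_sub_of_iff {a b : ℤ_[2]} (h : 2 ∣ a ↔ 2 ∣ b) : 2 ∣ a - b := by
  have hZMod2 : ∀ u v : ZMod (2 ^ 1), (u = 0 ↔ v = 0) → u - v = 0 := by decide
  simp only [two_dvd_iff_toZModPow_one, map_sub] at h ⊢
  exact hZMod2 _ _ h

theorem pow_dvd_sub_of_eq_add_two_mul (hg : IsLip 2 g) {d : ℤ_[2]}
    (hf : ∀ x, f x = d + x + 2 * g x) {x y : ℤ_[2]} :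
    ∀ n, (2 : ℤ_[2]) ^ n ∣ f x - f y → (2 : ℤ_[2]) ^ n ∣ x - y
  | 0 => fun _ => by simp
  | n + 1 => fun hfxy => by
    have hxy := pow_dvd_sub_of_eq_add_two_mul hg hf n ((pow_dvd_pow 2 n.le_succ).trans hfxy)
    have hgxy : (2 : ℤ_[2]) ^ (n + 1) ∣ 2 * (g x - g y) := by
      rw [pow_succ']
      exact mul_dvd_mul_left 2 (by simpa using isLip_iff_dvd.1 hg n x y (by simpa using hxy))
    have hsplit : x - y = (f x - f y) - 2 * (g x - g y) := by rw [hf, hf]; ring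
    rw [hsplit]
    exact dvd_sub hfxy hgxy

theorem bijModPow_of_eq_add_two_mul (hg : IsLip 2 g) {d : ℤ_[2]}
    (hf : ∀ x, f x = d + x + 2 * g x) (n : ℕ) : BijModPow 2 f n := by
  rw [bijModPow_iff, ← Finite.injective_iff_bijective]
  intro a b hab
  have hdvd := pow_dvd_sub_of_eq_add_two_mul hg hf n (by simpa using toZModPow_eq_iff_dvd.1 hab)
  rw [← toZModPow_natCast_val a, ← toZModPow_natCast_val b, toZModPow_eq_iff_dvd]
  simpa using hdvd

theorem exists_eq_add_two_mul_of_bijModPow (hf : IsLip 2 f) (hb : ∀ n, BijModPow 2 f n) :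
    ∃ d g, IsLip 2 g ∧ ∀ x, f x = d + x + 2 * g x := by
  have hkey : ∀ n x y, (2 : ℤ_[2]) ^ n ∣ x - y →
      (2 : ℤ_[2]) ^ (n + 1) ∣ (f x - x - f 0) - (f y - y - f 0) := by
    intro n x y hxy
    obtain ⟨a, ha⟩ := hxy
    obtain ⟨b, hb'⟩ : (2 : ℤ_[2]) ^ n ∣ f x - f y := by
      simpa using isLip_iff_dvd.1 hf n x y (by simpa using ⟨a, ha⟩)
    have hpow : ∀ c : ℤ_[2], (2 : ℤ_[2]) ^ (n + 1) ∣ 2 ^ n * c ↔ 2 ∣ c := fun c => by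
      rw [pow_succ, mul_dvd_mul_iff_left (pow_ne_zero n two_ne_zero)]
    have hparity : 2 ∣ b ↔ 2 ∣ a := by
      rw [← hpow, ← hpow, ← ha, ← hb']
      refine ⟨fun hfxy => by simpa using (hb (n + 1)).pow_dvd_sub hf (by simpa using hfxy),
        fun hxy => by simpa using isLip_iff_dvd.1 hf (n + 1) x y (by simpa using hxy)⟩
    rw [show (f x - x - f 0) - (f y - y - f 0) = (f x - f y) - (x - y) by ring, ha, hb',
      ← mul_sub]
    exact (hpow _).2 (two_dvd_sub_of_iff hparity)
  obtain ⟨g, hg, hfg⟩ := exists_isLip_eq_mul (p := 2) (F := fun x => f x - x - f 0)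
    (by simpa using hkey) (by simp)
  refine ⟨f 0, g, hg, fun x => ?_⟩
  linear_combination (by simpa using hfg x : f x - x - f 0 = 2 * g x)

theorem bijModPow_iff_exists (hf : IsLip 2 f) :
    (∀ n, BijModPow 2 f n) ↔ ∃ d g, IsLip 2 g ∧ ∀ x, f x = d + x + 2 * g x :=
  ⟨exists_eq_add_two_mul_of_bijModPow hf,
    fun ⟨_, _, hg, hform⟩ => bijModPow_of_eq_add_two_mul hg hform⟩

theorem pow_succ_dvd_iterate_sub (hf : IsLip 2 f) (hh : IsLip 2 h)
    (hform : ∀ x, f x = 1 + x + 2 * h x) (ht : TransModPow 2 f n) (y : ℤ_[2]) :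
    (2 : ℤ_[2]) ^ (n + 1) ∣ f^[2 ^ n] y - y - 2 ^ n - 2 * ∑ z ∈ range (2 ^ n), h z := by
  have hsum := toZModPow_eq_iff_dvd.1 ((hh.toZModPow_sum_range_iterate hf ht y).trans
    (hh.toZModPow_sum_range_add 0).symm)
  simp only [zero_add, Nat.cast_ofNat] at hsum
  rw [iterate_eq_add_sum hform, pow_succ']
  convert mul_dvd_mul_left 2 hsum using 1
  push_cast
  ring

theorem transModPow_of_pow_dvd_sum (hf : IsLip 2 f) (hh : IsLip 2 h)
    (hform : ∀ x, f x = 1 + x + 2 * h x)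
    (hsum : ∀ n, (2 : ℤ_[2]) ^ n ∣ ∑ z ∈ range (2 ^ n), h z) : ∀ n, TransModPow 2 f n
  | 0 => transModPow_iff_dvd.2 fun _ _ => ⟨0, by simp⟩
  | n + 1 => by
    have ht := transModPow_of_pow_dvd_sum hf hh hform hsum n
    have hshift : ∀ y, (2 : ℤ_[2]) ^ (n + 1) ∣ f^[2 ^ n] y - y - 2 ^ n := fun y => by
      have h2sum : (2 : ℤ_[2]) ^ (n + 1) ∣ 2 * ∑ z ∈ range (2 ^ n), h z := by
        rw [pow_succ']
        exact mul_dvd_mul_left 2 (hsum n)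
      simpa using dvd_add (pow_succ_dvd_iterate_sub hf hh hform ht y) h2sum
    -- `f^[2 ^ n]` preserves each residue class modulo `2 ^ n` and swaps its two lifts.
    rw [transModPow_iff_dvd] at ht ⊢
    push_cast at ht ⊢
    intro x z
    obtain ⟨r, w, hw⟩ := ht x z
    rcases two_dvd_or_two_dvd_sub_one w with ⟨v, rfl⟩ | ⟨v, hv⟩
    · exact ⟨r, v, by rw [hw]; ring⟩
    · refine ⟨2 ^ n + r, ?_⟩
      rw [iterate_add_apply]
      have hsplit : f^[2 ^ n] (f^[r] x) - z =
          (f^[2 ^ n] (f^[r] x) - f^[r] x - 2 ^ n) + 2 ^ (n + 1) * (v + 1) := by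
        linear_combination hw + 2 ^ n * hv
      rw [hsplit]
      exact dvd_add (hshift _) (dvd_mul_right _ _)

theorem pow_dvd_sum_of_transModPow (hf : IsLip 2 f) (hh : IsLip 2 h)
    (hform : ∀ x, f x = 1 + x + 2 * h x) (ht : ∀ n, TransModPow 2 f n) :
    ∀ n, (2 : ℤ_[2]) ^ n ∣ ∑ z ∈ range (2 ^ n), h z
  | 0 => by simp
  | n + 1 => by
    -- The orbit of `0` closes up modulo `2 ^ (n + 1)` after `2 ^ (n + 1)` steps but not modulo
    -- `2 ^ (n + 2)`; by `pow_succ_dvd_iterate_sub` this determines `S` modulo `2 ^ (n + 1)`.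
    set S := ∑ z ∈ range (2 ^ (n + 1)), h z
    have hkey := pow_succ_dvd_iterate_sub hf hh hform (ht (n + 1)) 0
    have hperiod : (2 : ℤ_[2]) ^ (n + 1) ∣ f^[2 ^ (n + 1)] 0 - 0 := by
      simpa using (ht (n + 1)).pow_dvd_iterate_sub hf 0
    have hnot : ¬(2 : ℤ_[2]) ^ (n + 2) ∣ f^[2 ^ (n + 1)] 0 - 0 := by
      simpa using (ht (n + 2)).not_pow_dvd_iterate_sub hf (by positivity)
        (Nat.pow_lt_pow_right (by norm_num) (by omega)) 0
    obtain ⟨s, hs⟩ : (2 : ℤ_[2]) ^ n ∣ S := by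
      have h2S : (2 : ℤ_[2]) ^ (n + 1) ∣ 2 * S := by
        have hsplit : 2 * S = (f^[2 ^ (n + 1)] 0 - 0) -
            (f^[2 ^ (n + 1)] 0 - 0 - 2 ^ (n + 1) - 2 * S) - 2 ^ (n + 1) := by ring
        rw [hsplit]
        exact dvd_sub (dvd_sub hperiod ((pow_dvd_pow 2 (n + 1).le_succ).trans hkey)) dvd_rfl
      rwa [pow_succ', mul_dvd_mul_iff_left two_ne_zero] at h2S
    rcases two_dvd_or_two_dvd_sub_one s with hs2 | ⟨t, ht⟩
    · rw [hs, pow_succ]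
      exact mul_dvd_mul_left _ hs2
    · refine absurd ?_ hnot
      have hsplit : f^[2 ^ (n + 1)] 0 - 0 =
          (f^[2 ^ (n + 1)] 0 - 0 - 2 ^ (n + 1) - 2 * S) + 2 ^ (n + 2) * (t + 1) := by
        linear_combination 2 * hs + 2 ^ (n + 1) * ht
      rw [hsplit]
      exact dvd_add hkey (dvd_mul_right _ _)

theorem transModPow_iff_exists (hf : IsLip 2 f) :
    (∀ n, TransModPow 2 f n) ↔
      ∃ g : ℤ_[2] → ℤ_[2], IsLip 2 g ∧ ∀ x, f x = 1 + x + 2 * (g (x + 1) - g x) := by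
  constructor
  · intro ht
    obtain ⟨d, g₀, hg₀, hform₀⟩ :=
      exists_eq_add_two_mul_of_bijModPow hf fun n => (ht n).bijModPow hf
    have hmoves := (ht 1).not_pow_dvd_iterate_sub hf one_ne_zero (by norm_num) 0
    simp only [iterate_one, hform₀, pow_one, Nat.cast_ofNat] at hmoves
    obtain ⟨e, he⟩ := (two_dvd_or_two_dvd_sub_one d).resolve_left fun hd =>
      hmoves (by simpa using dvd_add hd (dvd_mul_right 2 (g₀ 0)))
    have hform : ∀ x, f x = 1 + x + 2 * (e + g₀ x) := fun x => by
      rw [hform₀]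
      linear_combination he
    obtain ⟨g, hg, hΔ⟩ := exists_isLip_fwdDiff_eq (hg₀.const_add e)
      (by simpa using pow_dvd_sum_of_transModPow hf (hg₀.const_add e) hform ht)
    exact ⟨g, hg, fun x => by rw [hform, ← congrFun hΔ x]; rfl⟩
  · rintro ⟨g, hg, hform⟩
    exact transModPow_of_pow_dvd_sum hf (hg.fwdDiff 1) hform
      (by simpa using pow_dvd_sum_range_fwdDiff hg)

end VDP

open VDP MeasureTheory in
theorem stmt17 (f : ℤ_[2] → ℤ_[2]) (hf : IsLip 2 f) :
    (MeasurePreserving f (haarZp 2) (haarZp 2) ↔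
      ∃ (d : ℤ_[2]) (g : ℤ_[2] → ℤ_[2]), IsLip 2 g ∧
        ∀ x, f x = d + x + 2 * g x) ∧
    (Ergodic f (haarZp 2) ↔
      ∃ g : ℤ_[2] → ℤ_[2], IsLip 2 g ∧
        ∀ x, f x = 1 + x + 2 * (g (x + 1) - g x)) :=
  ⟨(measurePreserving_iff_bijModPow hf).trans (bijModPow_iff_exists hf),
    (ergodic_iff_transModPow hf).trans (transModPow_iff_exists hf)⟩
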